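/- There is a constant C depending only on the dimension d such that for every s ∈ R^d and every cube Q = Q(c,ℓ) in R^d, the average log_{s,-s,Q} of log_{s,-s}(x) = log|x−s| − log|x+s| over Q satisfies | log_{s,-s,Q} − ( log max(|c−s|, ℓ) − log max(|c+s|, ℓ) ) | ≤ C. -/

import Mathlib

open MeasureTheory Filter Set

noncomputable section

namespace TL

/-- Euclidean space `ℝ^d`. -/
abbrev Rd (d : ℕ) := EuclideanSpace ℝ (Fin d)

variable {d : ℕ}

/-- An axis-parallel cube in `ℝ^d` with center `c` and side length `len > 0`. -/
structure Cube (d : ℕ) where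
  c : Rd d
  len : ℝ
  len_pos : 0 < len

namespace Cube

/-- The set of points of the cube. -/
def set (Q : Cube d) : Set (Rd d) := {x | ∀ i, |x i - Q.c i| < Q.len / 2}

/-- The volume `ℓ^d` of a cube. -/
def vol (Q : Cube d) : ℝ := Q.len ^ d

/-- The cube dilated `α` times with respect to its center. -/
def dilate (Q : Cube d) (α : ℝ) (hα : 0 < α) : Cube d :=
  ⟨Q.c, α * Q.len, mul_pos hα Q.len_pos⟩

/-- The cube `2Q`. -/
def double (Q : Cube d) : Cube d := Q.dilate 2 two_pos

end Cube

/-- The average `f_Q` of `f` over the cube `Q`. -/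
def avg (Q : Cube d) (f : Rd d → ℝ) : ℝ := (Q.vol)⁻¹ * ∫ x in Q.set, f x

/-- The mean oscillation `‖f‖_Q = inf_b |Q|⁻¹ ∫_Q |f-b|`. -/
def osc (Q : Cube d) (f : Rd d → ℝ) : ℝ :=
  ⨅ b : ℝ, (Q.vol)⁻¹ * ∫ x in Q.set, |f x - b|

/-- The fixed unit cube `Q₀` centered at the origin. -/
def Q0 (d : ℕ) : Cube d := ⟨0, 1, one_pos⟩

/-- The `BMO` seminorm `sup_Q ‖f‖_Q`. -/
def bmoSeminorm (f : Rd d → ℝ) : ℝ := ⨆ Q : Cube d, osc Q f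

/-- Membership in `BMO(ℝ^d)`: local integrability together with finiteness of the seminorm. -/
def MemBMO (f : Rd d → ℝ) : Prop :=
  LocallyIntegrable f volume ∧ BddAbove (Set.range fun Q : Cube d => osc Q f)

/-- The `BMO` norm `‖f‖*_BMO = ‖f‖_BMO + |f_{Q₀}|`. -/
def bmoNorm (f : Rd d → ℝ) : ℝ := bmoSeminorm f + |avg (Q0 d) f|

/-- The side length `ℓ̃` of the smallest axis-parallel cube `Q̃` containing `Q` and `Q₀`. -/
def tildeLen (Q : Cube d) : ℝ :=
  ⨆ i : Fin d, (max (Q.c i + Q.len / 2) (1 / 2) - min (Q.c i - Q.len / 2) (-(1 / 2)))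

/-- The log-distance function `L(Q) = log max(ℓ̃/ℓ, ℓ̃) + 1`. -/
def Lfun (Q : Cube d) : ℝ := Real.log (max (tildeLen Q / Q.len) (tildeLen Q)) + 1

/-- The `LMO` seminorm `sup_Q L(Q)·‖f‖_Q`. -/
def lmoSeminorm (f : Rd d → ℝ) : ℝ := ⨆ Q : Cube d, Lfun Q * osc Q f

/-- Membership in `LMO(ℝ^d)`. -/
def MemLMO (f : Rd d → ℝ) : Prop :=
  LocallyIntegrable f volume ∧ BddAbove (Set.range fun Q : Cube d => Lfun Q * osc Q f)

/-- A Calderón–Zygmund kernel on `ℝ^d` with regularity exponent `δ ∈ (0,1]`. -/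
structure CZKernel (d : ℕ) where
  K : Rd d → Rd d → ℝ
  C : ℝ
  δ : ℝ
  δ_pos : 0 < δ
  δ_le_one : δ ≤ 1
  meas : Measurable (Function.uncurry K)
  size : ∀ x y : Rd d, x ≠ y → |K x y| ≤ C * ‖x - y‖ ^ (-(d : ℝ))
  regularity : ∀ x₁ x₂ y : Rd d, x₁ ≠ y → 2 * ‖x₁ - x₂‖ ≤ ‖x₁ - y‖ →
    |K x₁ y - K x₂ y| ≤ C * ‖x₁ - x₂‖ ^ δ / ‖x₁ - y‖ ^ ((d : ℝ) + δ)

/-- A Calderón–Zygmund operator: a bounded linear operator on `L²(ℝ^d)` associated to a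
Calderón–Zygmund kernel, i.e. represented by integration against the kernel a.e. outside
the support of compactly supported `L²` functions. -/
structure CZOperator (d : ℕ) extends CZKernel d where
  T : Lp ℝ 2 (volume : Measure (Rd d)) →L[ℝ] Lp ℝ 2 (volume : Measure (Rd d))
  repr : ∀ f : Lp ℝ 2 (volume : Measure (Rd d)),
    HasCompactSupport (f : Rd d → ℝ) →
    ∀ᵐ x : Rd d, x ∉ tsupport (f : Rd d → ℝ) → (T f : Rd d → ℝ) x = ∫ y, K x y * f y

open Classical in
/-- The local part `∫_{2Q} K(x,y) g(y) dy` of `T_Q g`, interpreted in the `L²` sense: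
`T` applied to `g·χ_{2Q}` (and junk value `0` if `g·χ_{2Q} ∉ L²`). -/
def TQloc (S : CZOperator d) (Q : Cube d) (g : Rd d → ℝ) : Rd d → ℝ :=
  fun x =>
    if h : MemLp (Q.double.set.indicator g) 2 (volume : Measure (Rd d)) then
      (S.T (MemLp.toLp _ h) : Rd d → ℝ) x
    else 0

/-- The tail part `∫_{ℝ^d∖2Q} (K(x,y)-K(c,y)) g(y) dy` of `T_Q g`. -/
def TQtail (S : CZOperator d) (Q : Cube d) (g : Rd d → ℝ) : Rd d → ℝ :=
  fun x => ∫ y in (Q.double.set)ᶜ, (S.K x y - S.K Q.c y) * g y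

/-- `T_Q g (x) = ∫_{2Q} K(x,y)g(y)dy + ∫_{ℝ^d∖2Q}(K(x,y)-K(c,y))g(y)dy` for `x ∈ Q`. -/
def TQ (S : CZOperator d) (Q : Cube d) (g : Rd d → ℝ) : Rd d → ℝ :=
  fun x => TQloc S Q g x + TQtail S Q g x

/-- `T_Q 1`, where `1` is the constant function `χ_{ℝ^d}`. -/
def Tone (S : CZOperator d) (Q : Cube d) : Rd d → ℝ := TQ S Q (fun _ => 1)

/-- For `f ∈ BMO`, `T_Q f = f_{2Q}·T_Q1 + T_Q(f - f_{2Q})`. -/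
def TQbmo (S : CZOperator d) (Q : Cube d) (f : Rd d → ℝ) : Rd d → ℝ :=
  fun x => avg Q.double f * Tone S Q x + TQ S Q (fun y => f y - avg Q.double f) x

/-- The seminorm `‖Tf‖_BMO = sup_Q ‖T_Q f‖_Q` for `f ∈ BMO`. -/
def TbmoSeminorm (S : CZOperator d) (f : Rd d → ℝ) : ℝ :=
  ⨆ Q : Cube d, osc Q (TQbmo S Q f)

/-- The function `log|x|`. -/
def logAbs : Rd d → ℝ := fun x => Real.log ‖x‖

/-- The function `log_{s,-s}(x) = log|x-s| - log|x+s|`. -/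
def logss (s : Rd d) : Rd d → ℝ := fun x => Real.log ‖x - s‖ - Real.log ‖x + s‖

/-!
It suffices to show that `|avg_Q log |x - a| - log M| ≤ C_d` for every `a`, where
`M = max(|c - a|, ℓ)`, and to apply this to `a = s` and `a = -s`. Every point of `Q` lies within
`(1 + √d) M` of `a`, which gives the upper bound. If `|c - a| ≥ √d ℓ`, every point of `Q` is also
at distance at least `M / 2` from `a`. Otherwise `M ≤ √d ℓ =: R`, and
`log |x - a| ≥ log R - log⁺ (R / |x - a|)`, where the layer-cake formula gives
`∫ log⁺ (R / |x - a|) dx ≤ |B(0,1)| R^d / d`, a bounded multiple of `|Q| = ℓ^d`.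
-/

open Metric Real Module

section LogSingularity

variable {E : Type*} [NormedAddCommGroup E]

lemma abs_log_le_posLog_add_posLog_inv (x : ℝ) : |log x| ≤ log⁺ x + log⁺ x⁻¹ := by
  have h := posLog_sub_posLog_inv (x := x)
  have h₁ : 0 ≤ log⁺ x := posLog_nonneg
  have h₂ : 0 ≤ log⁺ x⁻¹ := posLog_nonneg
  rw [abs_le]
  constructor <;> linarith

lemma setOf_lt_posLog_div_norm_sub_subset_ball {R t : ℝ} (hR : 0 < R) (ht : 0 < t) (a : E) :
    {x | t < log⁺ (R / ‖x - a‖)} ⊆ ball a (R * exp (-t)) := by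
  intro x hx
  have hlog : t < log (R / ‖x - a‖) := by
    simpa [posLog_apply, ht.not_gt] using hx
  have hxa : 0 < ‖x - a‖ := by
    refine (norm_nonneg _).lt_of_ne fun h => ?_
    rw [← h, div_zero, log_zero] at hlog
    linarith
  rw [lt_log_iff_exp_lt (by positivity), lt_div_iff₀ hxa] at hlog
  rw [mem_ball, dist_eq_norm, exp_neg, ← div_eq_mul_inv, lt_div_iff₀ (exp_pos t)]
  linarith

variable [MeasurableSpace E] [BorelSpace E]

lemma measurable_posLog_div_norm_sub (R : ℝ) (a : E) :
    Measurable fun x => log⁺ (R / ‖x - a‖) := by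
  fun_prop

variable [NormedSpace ℝ E] [FiniteDimensional ℝ E] (μ : Measure E) [μ.IsAddHaarMeasure]

lemma lintegral_posLog_div_norm_sub_le [Nontrivial E] {R : ℝ} (hR : 0 < R) (a : E) :
    ∫⁻ x, ENNReal.ofReal (log⁺ (R / ‖x - a‖)) ∂μ ≤
      ENNReal.ofReal (R ^ finrank ℝ E / finrank ℝ E) * μ (ball 0 1) := by
  set n := finrank ℝ E
  have hn : (0 : ℝ) < n := by exact_mod_cast finrank_pos
  have hball : ∀ t : ℝ, μ (ball a (R * exp (-t))) =
      ENNReal.ofReal (R ^ n * exp (-n * t)) * μ (ball 0 1) := by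
    intro t
    rw [μ.addHaar_ball a (by positivity), mul_pow, ← exp_nat_mul, mul_neg, neg_mul]
  have hexp : ∫ t in Ioi (0 : ℝ), R ^ n * exp (-n * t) = R ^ n / n := by
    rw [integral_const_mul, integral_exp_mul_Ioi (by linarith)]
    field_simp
    simp
  rw [lintegral_eq_lintegral_meas_lt μ (ae_of_all _ fun _ => posLog_nonneg)
    (measurable_posLog_div_norm_sub R a).aemeasurable]
  calc ∫⁻ t in Ioi 0, μ {x | t < log⁺ (R / ‖x - a‖)}
      ≤ ∫⁻ t in Ioi 0, ENNReal.ofReal (R ^ n * exp (-n * t)) * μ (ball 0 1) := by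
        refine setLIntegral_mono' measurableSet_Ioi fun t ht => ?_
        rw [← hball]
        exact measure_mono (setOf_lt_posLog_div_norm_sub_subset_ball hR ht a)
    _ = ENNReal.ofReal (R ^ n / n) * μ (ball 0 1) := by
        rw [lintegral_mul_const _ (by fun_prop), ← hexp,
          ofReal_integral_eq_lintegral_ofReal
            ((integrableOn_exp_mul_Ioi (by linarith) 0).const_mul _)
            (ae_of_all _ fun t => by positivity)]

lemma integrable_posLog_div_norm_sub [Nontrivial E] {R : ℝ} (hR : 0 < R) (a : E) :
    Integrable (fun x => log⁺ (R / ‖x - a‖)) μ := by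
  refine ⟨(measurable_posLog_div_norm_sub R a).aestronglyMeasurable, ?_⟩
  rw [hasFiniteIntegral_iff_ofReal (ae_of_all _ fun _ => posLog_nonneg)]
  exact (lintegral_posLog_div_norm_sub_le μ hR a).trans_lt
    (ENNReal.mul_lt_top ENNReal.ofReal_lt_top measure_ball_lt_top)

lemma integral_posLog_div_norm_sub_le [Nontrivial E] {R : ℝ} (hR : 0 < R) (a : E) :
    ∫ x, log⁺ (R / ‖x - a‖) ∂μ ≤ R ^ finrank ℝ E / finrank ℝ E * μ.real (ball 0 1) := by
  rw [integral_eq_lintegral_of_nonneg_ae (ae_of_all _ fun _ => posLog_nonneg)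
    (measurable_posLog_div_norm_sub R a).aestronglyMeasurable]
  refine (ENNReal.toReal_mono (ENNReal.mul_lt_top ENNReal.ofReal_lt_top measure_ball_lt_top).ne
    (lintegral_posLog_div_norm_sub_le μ hR a)).trans_eq ?_
  rw [ENNReal.toReal_mul, ENNReal.toReal_ofReal (by positivity), measureReal_def]

lemma locallyIntegrable_log_norm_sub [Nontrivial E] (a : E) :
    LocallyIntegrable (fun x => log ‖x - a‖) μ := by
  rw [locallyIntegrable_iff]
  intro K hK
  obtain ⟨R, hKR⟩ := hK.isBounded.subset_closedBall a
  have hdom : IntegrableOn (fun x => log⁺ R + log⁺ (1 / ‖x - a‖)) K μ :=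
    (integrableOn_const (hK.measure_lt_top.ne)).add
      (integrable_posLog_div_norm_sub μ one_pos a).integrableOn
  have hmeas : Measurable fun x => log ‖x - a‖ := by fun_prop
  refine hdom.mono' hmeas.aestronglyMeasurable
    ((ae_restrict_iff' hK.measurableSet).2 (ae_of_all _ fun x hx => ?_))
  have hxR : ‖x - a‖ ≤ R := by simpa [dist_eq_norm] using hKR hx
  calc ‖log ‖x - a‖‖ ≤ log⁺ ‖x - a‖ + log⁺ ‖x - a‖⁻¹ := abs_log_le_posLog_add_posLog_inv _
    _ ≤ log⁺ R + log⁺ (1 / ‖x - a‖) := by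
        rw [one_div]
        gcongr

end LogSingularity

lemma EuclideanSpace.norm_le_sqrt_card_mul {ι : Type*} [Fintype ι] {x : EuclideanSpace ℝ ι}
    {r : ℝ} (hr : 0 ≤ r) (hx : ∀ i, |x i| ≤ r) : ‖x‖ ≤ √(Fintype.card ι) * r := by
  rw [EuclideanSpace.norm_eq, ← sqrt_sq hr, ← sqrt_mul (Nat.cast_nonneg _)]
  refine sqrt_le_sqrt ?_
  calc ∑ i, ‖x i‖ ^ 2 ≤ ∑ _i : ι, r ^ 2 :=
        Finset.sum_le_sum fun i _ => pow_le_pow_left₀ (norm_nonneg _) (hx i) 2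
    _ = Fintype.card ι * r ^ 2 := by simp

namespace Cube

lemma set_eq_preimage_pi (Q : Cube d) :
    Q.set = (MeasurableEquiv.toLp 2 (Fin d → ℝ)).symm ⁻¹'
      univ.pi fun i => Ioo (Q.c i - Q.len / 2) (Q.c i + Q.len / 2) := by
  ext x
  simp only [Cube.set, mem_ofPred_eq, mem_preimage, mem_univ_pi, mem_Ioo,
    MeasurableEquiv.coe_toLp_symm, abs_sub_lt_iff]
  exact forall_congr' fun i => by constructor <;> rintro ⟨h₁, h₂⟩ <;> constructor <;> linarith

lemma measurableSet_set (Q : Cube d) : MeasurableSet Q.set := by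
  rw [set_eq_preimage_pi]
  exact (MeasurableEquiv.measurable _) (.univ_pi fun _ => measurableSet_Ioo)

lemma vol_pos (Q : Cube d) : 0 < Q.vol := pow_pos Q.len_pos d

lemma volume_set (Q : Cube d) : volume Q.set = ENNReal.ofReal Q.vol := by
  rw [set_eq_preimage_pi,
    (EuclideanSpace.volume_preserving_symm_measurableEquiv_toLp (Fin d)).measure_preimage
      (MeasurableSet.univ_pi fun _ => measurableSet_Ioo).nullMeasurableSet,
    volume_pi_pi]
  simp_rw [Real.volume_Ioo, add_sub_sub_cancel, add_halves]
  rw [Finset.prod_const, Finset.card_univ, Fintype.card_fin, ← ENNReal.ofReal_pow Q.len_pos.le,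
    vol]

lemma volume_set_ne_top (Q : Cube d) : volume Q.set ≠ ⊤ := by
  simp [volume_set]

lemma volume_real_set (Q : Cube d) : volume.real Q.set = Q.vol := by
  rw [measureReal_def, volume_set, ENNReal.toReal_ofReal Q.vol_pos.le]

lemma norm_sub_c_le {Q : Cube d} {x : Rd d} (hx : x ∈ Q.set) :
    ‖x - Q.c‖ ≤ √d * (Q.len / 2) := by
  simpa using EuclideanSpace.norm_le_sqrt_card_mul (by linarith [Q.len_pos]) fun i => (hx i).le

lemma norm_sub_le {Q : Cube d} {x : Rd d} (hx : x ∈ Q.set) (a : Rd d) :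
    ‖x - a‖ ≤ √d * (Q.len / 2) + ‖Q.c - a‖ :=
  (norm_sub_le_norm_sub_add_norm_sub x Q.c a).trans (by linarith [Q.norm_sub_c_le hx])

lemma set_subset_closedBall (Q : Cube d) : Q.set ⊆ closedBall Q.c (√d * (Q.len / 2)) :=
  fun _ hx => mem_closedBall_iff_norm.2 (norm_sub_c_le hx)

lemma integrableOn_set {f : Rd d → ℝ} (hf : LocallyIntegrable f) (Q : Cube d) :
    IntegrableOn f Q.set :=
  (hf.integrableOn_isCompact (isCompact_closedBall _ _)).mono_set Q.set_subset_closedBall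

end Cube

section Average

variable {Q : Cube d} {f g : Rd d → ℝ}

lemma avg_const (Q : Cube d) (b : ℝ) : avg Q (fun _ => b) = b := by
  rw [avg, setIntegral_const, Q.volume_real_set, smul_eq_mul, inv_mul_cancel_left₀ Q.vol_pos.ne']

lemma avg_sub (hf : IntegrableOn f Q.set) (hg : IntegrableOn g Q.set) :
    avg Q (fun x => f x - g x) = avg Q f - avg Q g := by
  rw [avg, avg, avg, integral_sub hf hg, mul_sub]

lemma avg_mono_ae (hf : IntegrableOn f Q.set) (hg : IntegrableOn g Q.set)
    (h : ∀ᵐ x ∂volume.restrict Q.set, f x ≤ g x) : avg Q f ≤ avg Q g :=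
  mul_le_mul_of_nonneg_left (integral_mono_ae hf hg h) (inv_nonneg.2 Q.vol_pos.le)

end Average

section LogAverage

variable [NeZero d]

lemma one_le_sqrt_dim : 1 ≤ √(d : ℝ) :=
  one_le_sqrt.2 (by exact_mod_cast Nat.one_le_iff_ne_zero.2 (NeZero.ne d))

lemma Cube.integrableOn_log_norm_sub (Q : Cube d) (a : Rd d) :
    IntegrableOn (fun x => log ‖x - a‖) Q.set :=
  Q.integrableOn_set (locallyIntegrable_log_norm_sub volume a)

lemma Cube.ae_restrict_mem_and_ne (Q : Cube d) (a : Rd d) :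
    ∀ᵐ x ∂volume.restrict Q.set, x ∈ Q.set ∧ x ≠ a := by
  filter_upwards [ae_restrict_mem Q.measurableSet_set,
    ae_restrict_of_ae (measure_eq_zero_iff_ae_notMem.1 (measure_singleton a))] with x hxQ hxa
  exact ⟨hxQ, hxa⟩

lemma avg_log_norm_sub_le (Q : Cube d) (a : Rd d) :
    avg Q (fun x => log ‖x - a‖) ≤ log (max ‖Q.c - a‖ Q.len) + log (1 + √d) := by
  set M := max ‖Q.c - a‖ Q.len
  have hM : 0 < M := Q.len_pos.trans_le (le_max_right _ _)
  rw [← avg_const Q (log M + log (1 + √d)), ← log_mul hM.ne' (by positivity)]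
  refine avg_mono_ae (Q.integrableOn_log_norm_sub a) (integrableOn_const Q.volume_set_ne_top) ?_
  filter_upwards [Q.ae_restrict_mem_and_ne a] with x ⟨hxQ, hxa⟩
  refine log_le_log (norm_pos_iff.2 (sub_ne_zero.2 hxa)) ?_
  have h₁ := Q.norm_sub_le hxQ a
  have h₂ : ‖Q.c - a‖ ≤ M := le_max_left _ _
  have h₃ : Q.len ≤ M := le_max_right _ _
  have h₄ : 0 ≤ √(d : ℝ) := sqrt_nonneg _
  nlinarith

lemma log_max_sub_log_two_le_avg_log_norm_sub {Q : Cube d} {a : Rd d}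
    (hfar : √d * Q.len ≤ ‖Q.c - a‖) :
    log (max ‖Q.c - a‖ Q.len) - log 2 ≤ avg Q (fun x => log ‖x - a‖) := by
  have hℓ := Q.len_pos
  have hsqrt := one_le_sqrt_dim (d := d)
  have hca : 0 < ‖Q.c - a‖ := by nlinarith
  rw [max_eq_left (by nlinarith), ← log_div hca.ne' two_ne_zero, ← avg_const Q (log _)]
  refine avg_mono_ae (integrableOn_const Q.volume_set_ne_top) (Q.integrableOn_log_norm_sub a) ?_
  filter_upwards [ae_restrict_mem Q.measurableSet_set] with x hx
  refine log_le_log (by positivity) ?_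
  have h₁ := norm_sub_le_norm_sub_add_norm_sub Q.c x a
  have h₂ := Q.norm_sub_c_le hx
  rw [norm_sub_rev] at h₂
  linarith

lemma log_max_sub_volume_ball_le_avg_log_norm_sub {Q : Cube d} {a : Rd d}
    (hnear : ‖Q.c - a‖ ≤ √d * Q.len) :
    log (max ‖Q.c - a‖ Q.len) - √d ^ d / d * volume.real (ball (0 : Rd d) 1) ≤
      avg Q (fun x => log ‖x - a‖) := by
  have hℓ := Q.len_pos
  set R := √d * Q.len
  have hR : 0 < R := mul_pos (one_pos.trans_le one_le_sqrt_dim) hℓ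
  have hMR : max ‖Q.c - a‖ Q.len ≤ R := max_le hnear (by nlinarith [one_le_sqrt_dim (d := d)])
  have hF := integrable_posLog_div_norm_sub volume hR a
  have havgF : avg Q (fun x => log⁺ (R / ‖x - a‖)) ≤
      √d ^ d / d * volume.real (ball (0 : Rd d) 1) := by
    have hint := (setIntegral_le_integral (s := Q.set) hF
      (ae_of_all _ fun _ => posLog_nonneg)).trans (integral_posLog_div_norm_sub_le volume hR a)
    rw [finrank_euclideanSpace_fin] at hint
    calc avg Q (fun x => log⁺ (R / ‖x - a‖))
        ≤ (Q.vol)⁻¹ * (R ^ d / d * volume.real (ball (0 : Rd d) 1)) :=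
          mul_le_mul_of_nonneg_left hint (inv_nonneg.2 Q.vol_pos.le)
      _ = √d ^ d / d * volume.real (ball (0 : Rd d) 1) := by
          rw [Cube.vol, mul_pow]
          field_simp
  calc log (max ‖Q.c - a‖ Q.len) - √d ^ d / d * volume.real (ball (0 : Rd d) 1)
      ≤ log R - avg Q (fun x => log⁺ (R / ‖x - a‖)) := by
        gcongr
    _ = avg Q (fun x => log R - log⁺ (R / ‖x - a‖)) := by
        rw [avg_sub (integrableOn_const Q.volume_set_ne_top) hF.integrableOn, avg_const]
    _ ≤ avg Q (fun x => log ‖x - a‖) := by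
        refine avg_mono_ae ((integrableOn_const Q.volume_set_ne_top).sub hF.integrableOn)
          (Q.integrableOn_log_norm_sub a) ?_
        filter_upwards [Q.ae_restrict_mem_and_ne a] with x ⟨_, hxa⟩
        have hlog : log (R / ‖x - a‖) ≤ log⁺ (R / ‖x - a‖) := le_max_right _ _
        rw [log_div hR.ne' (norm_ne_zero_iff.2 (sub_ne_zero.2 hxa))] at hlog
        linarith

lemma abs_avg_log_norm_sub_sub_log_max_le (Q : Cube d) (a : Rd d) :
    |avg Q (fun x => log ‖x - a‖) - log (max ‖Q.c - a‖ Q.len)| ≤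
      log (1 + √d) + log 2 + √d ^ d / d * volume.real (ball (0 : Rd d) 1) := by
  have hsqrt := one_le_sqrt_dim (d := d)
  have hlog₁ : 0 ≤ log (1 + √d) := log_nonneg (by linarith)
  have hlog₂ : 0 ≤ log 2 := log_nonneg one_le_two
  have hK : 0 ≤ √d ^ d / d * volume.real (ball (0 : Rd d) 1) := by positivity
  have hupper := avg_log_norm_sub_le Q a
  rw [abs_le]
  refine ⟨?_, by linarith⟩
  rcases le_total (√d * Q.len) ‖Q.c - a‖ with hfar | hnear
  · linarith [log_max_sub_log_two_le_avg_log_norm_sub hfar]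
  · linarith [log_max_sub_volume_ball_le_avg_log_norm_sub hnear]

end LogAverage

/-- There is a dimensional constant `C` such that for every `s ∈ ℝ^d` and every cube
`Q = Q(c,ℓ)`, the average of `log_{s,-s}` over `Q` satisfies
`|log_{s,-s,Q} - (log max(|c-s|,ℓ) - log max(|c+s|,ℓ))| ≤ C`. -/
theorem statement_12 {d : ℕ} (hd : 0 < d) :
    ∃ C : ℝ, ∀ (s : Rd d) (Q : Cube d),
      |avg Q (logss s) -
        (Real.log (max ‖Q.c - s‖ Q.len) - Real.log (max ‖Q.c + s‖ Q.len))| ≤ C := by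
  have : NeZero d := ⟨hd.ne'⟩
  set K := log (1 + √d) + log 2 + √d ^ d / d * volume.real (ball (0 : Rd d) 1)
  refine ⟨2 * K, fun s Q => ?_⟩
  have hminus := abs_avg_log_norm_sub_sub_log_max_le Q s
  have hplus := abs_avg_log_norm_sub_sub_log_max_le Q (-s)
  simp only [sub_neg_eq_add] at hplus
  have hsplit : avg Q (logss s) =
      avg Q (fun x => log ‖x - s‖) - avg Q (fun x => log ‖x + s‖) :=
    avg_sub (Q.integrableOn_log_norm_sub s)
      (by simpa using Q.integrableOn_log_norm_sub (-s))
  rw [hsplit, sub_sub_sub_comm]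
  linarith [abs_sub _ _ |>.trans (add_le_add hminus hplus)]

end TL
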